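/- The schema ⟨[G∪H]⟩φ → ⟨[G]⟩⟨[H]⟩φ is not valid: with agents A = {a,b,c}, G = {a}, H = {b}, propositional variables p, q, r, and φ := K_b(p∧q∧r) ∧ ¬K_a(p∧q∧r) ∧ ¬K_c(p∧q∧r), there is a pointed epistemic model (M, pqr) — with four states pqr, pq¬r, ¬pqr, p¬qr, where agent a cannot distinguish pqr from ¬pqr, agent b cannot distinguish pqr from p¬qr, agent c cannot distinguish pqr, pq¬r, ¬pqr from each other, and the valuation sets each of p, q, r true exactly at the states whose name contains it unnegated — such that (M, pqr) ⊨ ⟨[{a,b}]⟩φ but (M, pqr) ⊭ ⟨[{a}]⟩⟨[{b}]⟩φ. -/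

import Mathlib

/- Formalization of Coalition and Relativised Group Announcement Logic (CoRGAL). -/

namespace CoRGAL

/-- Purely epistemic formulas (the fragment L_EL). -/
inductive EForm (Agt : Type) : Type
  | atom : ℕ → EForm Agt
  | neg  : EForm Agt → EForm Agt
  | and  : EForm Agt → EForm Agt → EForm Agt
  | know : Agt → EForm Agt → EForm Agt

/-- Formulas of L_CoRGAL: atoms, ¬, ∧, K_a, [φ]ψ, [G,χ]φ, [⟨G⟩]φ. -/
inductive Form (Agt : Type) : Type
  | atom  : ℕ → Form Agt
  | neg   : Form Agt → Form Agt
  | and   : Form Agt → Form Agt → Form Agt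
  | know  : Agt → Form Agt → Form Agt
  | ann   : Form Agt → Form Agt → Form Agt          -- [φ]ψ
  | group : Finset Agt → Form Agt → Form Agt → Form Agt  -- [G,χ]φ
  | coal  : Finset Agt → Form Agt → Form Agt        -- [⟨G⟩]φ

variable {Agt : Type}

def Form.imp (φ ψ : Form Agt) : Form Agt := .neg (.and φ (.neg ψ))
def Form.iff' (φ ψ : Form Agt) : Form Agt := .and (φ.imp ψ) (ψ.imp φ)
def Form.bot : Form Agt := .and (.atom 0) (.neg (.atom 0))
def Form.top : Form Agt := .neg Form.bot

def EForm.toForm : EForm Agt → Form Agt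
  | .atom p => .atom p
  | .neg φ => .neg φ.toForm
  | .and φ ψ => .and φ.toForm ψ.toForm
  | .know a φ => .know a φ.toForm

/-- The G-announcement ⋀_{i ∈ G} K_i (f i), with all f i epistemic. -/
noncomputable def GAnn (G : Finset Agt) (f : Agt → EForm Agt) : Form Agt :=
  (G.toList.map fun i => Form.know i (f i).toForm).foldr Form.and Form.top

/-- Epistemic models: states, an equivalence relation for each agent, a valuation. -/
structure Model (Agt : Type) where
  W : Type
  rel : Agt → W → W → Prop
  rel_equiv : ∀ a, Equivalence (rel a)
  val : ℕ → W → Prop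

/-- Updated model: restriction to the states satisfying S. -/
def Model.restrict (M : Model Agt) (S : M.W → Prop) : Model Agt where
  W := {v : M.W // S v}
  rel a u v := M.rel a u.1 v.1
  rel_equiv a := ⟨fun u => (M.rel_equiv a).refl u.1,
    fun h => (M.rel_equiv a).symm h, fun h h' => (M.rel_equiv a).trans h h'⟩
  val p v := M.val p v.1

/-- Satisfaction for purely epistemic formulas (standard S5 semantics). -/
def esat (M : Model Agt) : M.W → EForm Agt → Prop
  | w, .atom p => M.val p w
  | w, .neg φ => ¬ esat M w φ
  | w, .and φ ψ => esat M w φ ∧ esat M w ψ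
  | w, .know a φ => ∀ v, M.rel a w v → esat M v φ

/-- Truth of the G-announcement ⋀_{i∈G} K_i (f i) at (M,w). -/
def gsat (M : Model Agt) (w : M.W) (G : Finset Agt) (f : Agt → EForm Agt) : Prop :=
  ∀ i ∈ G, ∀ v, M.rel i w v → esat M v (f i)

variable [DecidableEq Agt] [Fintype Agt]

/-- Satisfaction for L_CoRGAL.
[φ]ψ: if φ is true then ψ holds in the model restricted to φ-states.
[G,χ]φ: χ is true and for every G-announcement ψ_G, [ψ_G ∧ χ]φ.
[⟨G⟩]φ: for every G-announcement ψ_G there is an (A∖G)-announcement χ such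
that if ψ_G is true then ⟨ψ_G ∧ χ⟩φ. -/
def sat : (M : Model Agt) → M.W → Form Agt → Prop
  | M, w, .atom p => M.val p w
  | M, w, .neg φ => ¬ sat M w φ
  | M, w, .and φ ψ => sat M w φ ∧ sat M w ψ
  | M, w, .know a φ => ∀ v, M.rel a w v → sat M v φ
  | M, w, .ann φ ψ =>
      ∀ h : sat M w φ, sat (M.restrict fun v => sat M v φ) ⟨w, h⟩ ψ
  | M, w, .group G χ φ =>
      sat M w χ ∧ ∀ f : Agt → EForm Agt,
        ∀ h : gsat M w G f ∧ sat M w χ,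
          sat (M.restrict fun v => gsat M v G f ∧ sat M v χ) ⟨w, h⟩ φ
  | M, w, .coal G φ =>
      ∀ f : Agt → EForm Agt, ∃ g : Agt → EForm Agt,
        gsat M w G f →
          ∃ h : gsat M w G f ∧ gsat M w Gᶜ g,
            sat (M.restrict fun v => gsat M v G f ∧ gsat M v Gᶜ g) ⟨w, h⟩ φ

/-- Validity: truth at every pointed epistemic model. -/
def valid (φ : Form Agt) : Prop := ∀ (M : Model Agt) (w : M.W), sat M w φ

/-- The dual coalition operator ⟨[G]⟩φ := ¬[⟨G⟩]¬φ. -/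
def coalDia (G : Finset Agt) (φ : Form Agt) : Form Agt := .neg (.coal G (.neg φ))

/-- Necessity forms η ::= ♯ | φ → η | K_a η | [φ]η. -/
inductive NForm (Agt : Type) : Type
  | hole : NForm Agt
  | imp  : Form Agt → NForm Agt → NForm Agt
  | know : Agt → NForm Agt → NForm Agt
  | ann  : Form Agt → NForm Agt → NForm Agt

/-- η(φ): replace the placeholder ♯ by φ. -/
def NForm.subst : NForm Agt → Form Agt → Form Agt
  | .hole, φ => φ
  | .imp ψ η, φ => ψ.imp (η.subst φ)
  | .know a η, φ => .know a (η.subst φ)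
  | .ann ψ η, φ => .ann ψ (η.subst φ)

/-- Instances of propositional tautologies (treating non-Boolean subformulas as atoms). -/
def Tautology (φ : Form Agt) : Prop :=
  ∀ v : Form Agt → Prop,
    (∀ ψ, v (Form.neg ψ) ↔ ¬ v ψ) →
    (∀ ψ χ, v (Form.and ψ χ) ↔ (v ψ ∧ v χ)) →
    v φ

/-- The axiom system CoRGAL: theorems. -/
inductive Thm {Agt : Type} [DecidableEq Agt] [Fintype Agt] : Form Agt → Prop
  | taut {φ : Form Agt} : Tautology φ → Thm φ
  | a1 (a : Agt) (φ ψ : Form Agt) :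
      Thm ((Form.know a (φ.imp ψ)).imp ((Form.know a φ).imp (Form.know a ψ)))
  | a2 (a : Agt) (φ : Form Agt) : Thm ((Form.know a φ).imp φ)
  | a3 (a : Agt) (φ : Form Agt) : Thm ((Form.know a φ).imp (Form.know a (Form.know a φ)))
  | a4 (a : Agt) (φ : Form Agt) :
      Thm ((Form.neg (Form.know a φ)).imp (Form.know a (Form.neg (Form.know a φ))))
  | a5 (φ : Form Agt) (p : ℕ) : Thm ((Form.ann φ (.atom p)).iff' (φ.imp (.atom p)))
  | a6 (φ ψ : Form Agt) : Thm ((Form.ann φ (.neg ψ)).iff' (φ.imp (.neg (Form.ann φ ψ))))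
  | a7 (φ ψ χ : Form Agt) :
      Thm ((Form.ann φ (.and ψ χ)).iff' ((Form.ann φ ψ).and (Form.ann φ χ)))
  | a8 (φ : Form Agt) (a : Agt) (ψ : Form Agt) :
      Thm ((Form.ann φ (.know a ψ)).iff' (φ.imp (.know a (Form.ann φ ψ))))
  | a9 (φ ψ χ : Form Agt) :
      Thm ((Form.ann φ (.ann ψ χ)).iff' (Form.ann (φ.and (Form.ann φ ψ)) χ))
  | a10 (G : Finset Agt) (χ φ : Form Agt) (f : Agt → EForm Agt) :
      Thm ((Form.group G χ φ).imp (χ.and (Form.ann ((GAnn G f).and χ) φ)))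
  | a11 (G : Finset Agt) (φ : Form Agt) (f : Agt → EForm Agt) :
      Thm ((Form.coal G φ).imp (.neg (Form.group Gᶜ (GAnn G f) (.neg φ))))
  | mp {φ ψ : Form Agt} : Thm (φ.imp ψ) → Thm φ → Thm ψ
  | necK (a : Agt) {φ : Form Agt} : Thm φ → Thm (Form.know a φ)
  | necAnn (ψ : Form Agt) {φ : Form Agt} : Thm φ → Thm (Form.ann ψ φ)
  | necGroup (G : Finset Agt) (χ : Form Agt) {φ : Form Agt} : Thm φ → Thm (Form.group G χ φ)
  | necCoal (G : Finset Agt) {φ : Form Agt} : Thm φ → Thm (Form.coal G φ)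
  | r5 {η : NForm Agt} {G : Finset Agt} {χ φ : Form Agt} :
      (∀ f : Agt → EForm Agt, Thm (η.subst (χ.and (Form.ann ((GAnn G f).and χ) φ)))) →
      Thm (η.subst (Form.group G χ φ))
  | r6 {η : NForm Agt} {G : Finset Agt} {φ : Form Agt} :
      (∀ f : Agt → EForm Agt, Thm (η.subst (.neg (Form.group Gᶜ (GAnn G f) (.neg φ))))) →
      Thm (η.subst (Form.coal G φ))

/-- A theory: contains all theorems, closed under modus ponens (R0), R5 and R6. -/
structure IsTheory (x : Set (Form Agt)) : Prop where
  mem_of_thm : ∀ {φ : Form Agt}, Thm φ → φ ∈ x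
  mp : ∀ {φ ψ : Form Agt}, φ.imp ψ ∈ x → φ ∈ x → ψ ∈ x
  r5 : ∀ (η : NForm Agt) (G : Finset Agt) (χ φ : Form Agt),
        (∀ f : Agt → EForm Agt, η.subst (χ.and (Form.ann ((GAnn G f).and χ) φ)) ∈ x) →
        η.subst (Form.group G χ φ) ∈ x
  r6 : ∀ (η : NForm Agt) (G : Finset Agt) (φ : Form Agt),
        (∀ f : Agt → EForm Agt, η.subst (.neg (Form.group Gᶜ (GAnn G f) (.neg φ))) ∈ x) →
        η.subst (Form.coal G φ) ∈ x

def Consistent (x : Set (Form Agt)) : Prop := Form.bot ∉ x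
def Maximal (x : Set (Form Agt)) : Prop := ∀ φ : Form Agt, φ ∈ x ∨ Form.neg φ ∈ x
def MCT (x : Set (Form Agt)) : Prop := IsTheory x ∧ Consistent x ∧ Maximal x

/-- The canonical model: worlds are maximal consistent theories. -/
def canonicalModel (Agt : Type) [DecidableEq Agt] [Fintype Agt] : Model Agt where
  W := {x : Set (Form Agt) // MCT x}
  rel a x y := {φ : Form Agt | Form.know a φ ∈ x.1} = {φ : Form Agt | Form.know a φ ∈ y.1}
  rel_equiv _ := ⟨fun _ => rfl, Eq.symm, Eq.trans⟩
  val p x := Form.atom p ∈ x.1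

/-- Size of a formula. -/
def fsize : Form Agt → ℕ
  | .atom _ => 1
  | .neg φ => fsize φ + 1
  | .know _ φ => fsize φ + 1
  | .group _ _ φ => fsize φ + 1
  | .coal _ φ => fsize φ + 1
  | .and φ ψ => fsize φ + fsize ψ + 1
  | .ann ψ φ => fsize ψ + 3 * fsize φ

/-- The [,]-depth. -/
def dG : Form Agt → ℕ
  | .atom _ => 0
  | .neg φ => dG φ
  | .know _ φ => dG φ
  | .coal _ φ => dG φ
  | .and φ ψ => max (dG φ) (dG ψ)
  | .ann ψ φ => dG ψ + dG φ
  | .group _ χ φ => dG χ + dG φ + 1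

/-- The [⟨⟩]-depth. -/
def dC : Form Agt → ℕ
  | .atom _ => 0
  | .neg φ => dC φ
  | .know _ φ => dC φ
  | .and φ ψ => max (dC φ) (dC ψ)
  | .ann ψ φ => dC ψ + dC φ
  | .group _ χ φ => dC χ + dC φ
  | .coal _ φ => dC φ + 1

/-- The well-founded order <^{Size}_{[,],[⟨⟩]}. -/
def measLt (φ ψ : Form Agt) : Prop :=
  dC φ < dC ψ ∨ (dC φ = dC ψ ∧ (dG φ < dG ψ ∨ (dG φ = dG ψ ∧ fsize φ < fsize ψ)))

end CoRGAL

open CoRGAL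

/-- The three agents a, b, c. -/
inductive Ag : Type
  | a | b | c
deriving DecidableEq

instance : Fintype Ag where
  elems := {Ag.a, Ag.b, Ag.c}
  complete := fun x => by cases x <;> simp

/-- The four states pqr, pq¬r, ¬pqr, p¬qr. -/
inductive St : Type
  | pqr | pqnr | npqr | pnqr
deriving DecidableEq

/-- Equivalence classes of the indistinguishability relations: a cannot distinguish
pqr from ¬pqr, b cannot distinguish pqr from p¬qr, c cannot distinguish pqr, pq¬r,
¬pqr from each other. -/
def cls : Ag → St → ℕ
  | .a, .pqr => 0
  | .a, .npqr => 0
  | .a, .pqnr => 1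
  | .a, .pnqr => 2
  | .b, .pqr => 0
  | .b, .pnqr => 0
  | .b, .pqnr => 1
  | .b, .npqr => 2
  | .c, .pqr => 0
  | .c, .pqnr => 0
  | .c, .npqr => 0
  | .c, .pnqr => 1

/-- Valuation: p (atom 0), q (atom 1), r (atom 2) are true exactly at the states whose
name contains them unnegated. -/
def cval : ℕ → St → Prop
  | 0, .pqr => True
  | 0, .pqnr => True
  | 0, .pnqr => True
  | 1, .pqr => True
  | 1, .pqnr => True
  | 1, .npqr => True
  | 2, .pqr => True
  | 2, .npqr => True
  | 2, .pnqr => True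
  | _, _ => False

/-- The counterexample model. -/
def cmod : Model Ag where
  W := St
  rel i u v := cls i u = cls i v
  rel_equiv _ := ⟨fun _ => rfl, Eq.symm, Eq.trans⟩
  val := cval

/-- p ∧ q ∧ r. -/
def pqrF : Form Ag := (Form.atom 0).and ((Form.atom 1).and (Form.atom 2))

/-- φ := K_b(p∧q∧r) ∧ ¬K_a(p∧q∧r) ∧ ¬K_c(p∧q∧r). -/
def phiC : Form Ag :=
  (Form.know Ag.b pqrF).and
    ((Form.neg (Form.know Ag.a pqrF)).and (Form.neg (Form.know Ag.c pqrF)))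

/-! Jointly, a and b announce `K_a q ∧ K_b r`, which removes p¬qr and pq¬r; whatever c adds
must hold at ¬pqr too, since c cannot tell it from pqr. In the result b knows p∧q∧r while a and
c do not. If a has to move first, b and c answer with `K_b p`, which removes ¬pqr, the only
state a confuses with pqr; from then on a knows p∧q∧r whatever b says. In every (iterated)
update of the model, φ holds at pqr iff p¬qr is gone and ¬pqr survives (`sat_phiC_iff`). -/

namespace CoRGAL

variable {Agt : Type}

def EForm.top : EForm Agt := .neg (.and (.atom 0) (.neg (.atom 0)))

theorem esat_top (M : Model Agt) (w : M.W) : esat M w EForm.top :=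
  fun h => h.2 h.1

theorem gsat_const_top (M : Model Agt) (w : M.W) (G : Finset Agt) :
    gsat M w G fun _ => EForm.top :=
  fun _ _ v _ => esat_top M v

theorem gsat_of_forall_rel {M : Model Agt} {w v : M.W} {G : Finset Agt} {f : Agt → EForm Agt}
    (hwv : ∀ i ∈ G, M.rel i w v) (hw : gsat M w G f) : gsat M v G f :=
  fun i hi u hvu => hw i hi u ((M.rel_equiv i).trans (hwv i hi) hvu)

theorem sat_coalDia_iff [DecidableEq Agt] [Fintype Agt] (M : Model Agt) (w : M.W)
    (G : Finset Agt) (φ : Form Agt) :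
    sat M w (coalDia G φ) ↔ ∃ f, gsat M w G f ∧ ∀ g (h : gsat M w G f ∧ gsat M w Gᶜ g),
      sat (M.restrict fun v => gsat M v G f ∧ gsat M v Gᶜ g) ⟨w, h⟩ φ := by
  simp only [coalDia, sat, not_forall, not_exists, not_not, exists_prop]
  exact exists_congr fun f =>
    ⟨fun H => ⟨(H fun _ => .top).1, fun g => (H g).2⟩, fun ⟨hf, H⟩ g => ⟨hf, H g⟩⟩

/-- Iterated updates `(M^ψ)^χ` are not literally of the form `M^θ`; maps that pull back
accessibility and valuation let a single lemma evaluate formulas in all of them. -/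
structure Model.IsStrongHom (N M : Model Agt) (π : N.W → M.W) : Prop where
  rel_iff : ∀ a u v, N.rel a u v ↔ M.rel a (π u) (π v)
  val_iff : ∀ p u, N.val p u ↔ M.val p (π u)

theorem Model.isStrongHom_restrict (M : Model Agt) (S : M.W → Prop) :
    (M.restrict S).IsStrongHom M Subtype.val :=
  ⟨fun _ _ _ => Iff.rfl, fun _ _ => Iff.rfl⟩

theorem Model.IsStrongHom.comp {K N M : Model Agt} {π : N.W → M.W} {ρ : K.W → N.W}
    (hπ : N.IsStrongHom M π) (hρ : K.IsStrongHom N ρ) : K.IsStrongHom M (π ∘ ρ) :=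
  ⟨fun a u v => (hρ.rel_iff a u v).trans (hπ.rel_iff a _ _),
    fun p u => (hρ.val_iff p u).trans (hπ.val_iff p _)⟩

end CoRGAL

theorem St.forall {P : St → Prop} :
    (∀ s, P s) ↔ P .pqr ∧ P .pqnr ∧ P .npqr ∧ P .pnqr :=
  ⟨fun h => ⟨h _, h _, h _, h _⟩,
    fun ⟨h₁, h₂, h₃, h₄⟩ s => by cases s <;> assumption⟩

theorem Ag.forall {P : Ag → Prop} : (∀ i, P i) ↔ P .a ∧ P .b ∧ P .c :=
  ⟨fun h => ⟨h _, h _, h _⟩, fun ⟨h₁, h₂, h₃⟩ i => by cases i <;> assumption⟩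

section Counterexample

variable {N : Model Ag} {π : N.W → St}

theorem sat_pqrF_iff (hπ : N.IsStrongHom cmod π) (u : N.W) :
    sat N u pqrF ↔ π u = St.pqr := by
  simp only [pqrF, sat, hπ.val_iff]
  generalize π u = s
  cases s <;> simp [cmod, cval]

theorem sat_know_pqrF_iff (hπ : N.IsStrongHom cmod π) (i : Ag) (w : N.W) :
    sat N w (.know i pqrF) ↔ ∀ v, cls i (π w) = cls i (π v) → π v = St.pqr :=
  forall_congr' fun v => imp_congr (hπ.rel_iff i w v) (sat_pqrF_iff hπ v)

theorem sat_phiC_iff (hπ : N.IsStrongHom cmod π) (w : N.W) (hw : π w = St.pqr) :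
    sat N w phiC ↔ (∀ v, π v ≠ St.pnqr) ∧ ∃ v, π v = St.npqr := by
  have hcls : ∀ s : St, ((cls .b .pqr = cls .b s → s = .pqr) ↔ s ≠ .pnqr) ∧
      ((cls .a .pqr = cls .a s → s = .pqr) ↔ s ≠ .npqr) ∧
      ((cls .c .pqr = cls .c s → s = .pqr) ↔ s ≠ .pqnr ∧ s ≠ .npqr) := by
    simp [St.forall, cls]
  change sat N w (.know .b pqrF) ∧ ¬sat N w (.know .a pqrF) ∧ ¬sat N w (.know .c pqrF) ↔ _
  simp only [sat_know_pqrF_iff hπ, hw, hcls]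
  push Not
  exact ⟨fun ⟨hb, ha, _⟩ => ⟨hb, ha⟩,
    fun ⟨hb, v, hv⟩ => ⟨hb, ⟨v, hv⟩, v, fun _ => hv⟩⟩

def knowQR : Ag → EForm Ag
  | .a => .atom 1
  | .b => .atom 2
  | .c => .top

def knowP : Ag → EForm Ag
  | .b => .atom 0
  | _ => .top

theorem gsat_knowQR_iff (s : St) :
    gsat cmod s {Ag.a, Ag.b} knowQR ↔ s = St.pqr ∨ s = St.npqr := by
  cases s <;> simp [gsat, cmod, esat, knowQR, cval, cls, St.forall]

theorem gsat_knowP_iff (s : St) :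
    gsat cmod s {Ag.a}ᶜ knowP ↔ s ≠ St.npqr := by
  cases s <;> simp [gsat, cmod, esat, knowP, cval, cls, St.forall, Ag.forall, esat_top]

end Counterexample

/-- the schema ⟨[G∪H]⟩φ → ⟨[G]⟩⟨[H]⟩φ is not valid: in the model above,
(M,pqr) ⊨ ⟨[{a,b}]⟩φ but (M,pqr) ⊭ ⟨[{a}]⟩⟨[{b}]⟩φ. -/
theorem statement9 :
    sat cmod St.pqr (coalDia {Ag.a, Ag.b} phiC) ∧
    ¬ sat cmod St.pqr (coalDia {Ag.a} (coalDia {Ag.b} phiC)) := by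
  constructor
  · refine (sat_coalDia_iff _ _ _ _).2
      ⟨knowQR, (gsat_knowQR_iff _).2 (.inl rfl), fun g h => ?_⟩
    have hc_rel : ∀ i ∈ ({Ag.a, Ag.b} : Finset Ag)ᶜ, cmod.rel i St.pqr St.npqr := by
      simp [Ag.forall, cmod, cls]
    refine (sat_phiC_iff (cmod.isStrongHom_restrict _) _ rfl).2 ⟨fun v hv => ?_,
      ⟨St.npqr, (gsat_knowQR_iff _).2 (.inr rfl), gsat_of_forall_rel hc_rel h.2⟩, rfl⟩
    simpa [hv] using (gsat_knowQR_iff _).1 v.2.1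
  · intro hsat
    obtain ⟨f, hf, H⟩ := (sat_coalDia_iff _ _ _ _).1 hsat
    obtain ⟨f', hf', H'⟩ :=
      (sat_coalDia_iff _ _ _ _).1 (H knowP ⟨hf, (gsat_knowP_iff _).2 (by decide)⟩)
    obtain ⟨-, v, hv⟩ := (sat_phiC_iff ((cmod.isStrongHom_restrict _).comp
      (Model.isStrongHom_restrict _ _)) _ rfl).1 (H' _ ⟨hf', gsat_const_top _ _ _⟩)
    exact (gsat_knowP_iff _).1 v.1.2.2 hv
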